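/- Let A, B be positive invertible operators with 0 < mI ≤ A, B ≤ MI, h = M/m > 1, ν ∈ [0,1], r = min{ν, 1−ν}. Then h·√M·L(√M, √m)·log S(√h) · I ≥ (1−ν)A + νB − A♯_ν B − 2r((A+B)/2 − A♯_{1/2}B) in the Loewner order. -/

import Mathlib

variable {H : Type*} [NormedAddCommGroup H] [InnerProductSpace ℂ H] [CompleteSpace H]

/-- The weighted operator geometric mean `A ♯_ν B = A^{1/2} (A^{-1/2} B A^{-1/2})^ν A^{1/2}`. -/
noncomputable def geomMean (A B : H →L[ℂ] H) (ν : ℝ) : H →L[ℂ] H :=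
  A ^ ((1:ℝ)/2) * (A ^ (-(1:ℝ)/2) * B * A ^ (-(1:ℝ)/2)) ^ ν * A ^ ((1:ℝ)/2)

/-- Specht's ratio `S(h) = h^{1/(h-1)} / (e log h^{1/(h-1)})` for `h ≠ 1`, with `S(1) = 1`. -/
noncomputable def specht (h : ℝ) : ℝ :=
  if h = 1 then 1
  else h ^ ((1:ℝ)/(h-1)) / (Real.exp 1 * Real.log (h ^ ((1:ℝ)/(h-1))))

/-- The logarithmic mean `L(x,y) = (y-x)/(log y - log x)` for `x ≠ y`, with `L(x,x) = x`. -/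
noncomputable def logMean (x y : ℝ) : ℝ :=
  if x = y then x else (y - x) / (Real.log y - Real.log x)

/-!
Put `X = A^{-1/2} B A^{-1/2}`; its spectrum lies in `[h⁻¹, h]`, and the left-hand side is
`A^{1/2} g(X) A^{1/2}` for the scalar function `g(x) = (1-ν) + νx - x^ν - 2r((1+x)/2 - √x)`.
So it suffices to bound `g` on `[h⁻¹, h]` by `√h · F(√h)`, where
`F(u) = 1 - L(1,u) + L(1,u) log L(1,u) = L(1,u) log S(u)`, and then to use `A ≤ M`.
With `x = y²`, `g(x)` is `φ_μ(y) = 1 + μ(y-1) - y^μ` for `μ = 2ν` when `ν ≤ 1/2`, and `y φ_μ(y)` for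
`μ = 2ν - 1` when `ν ≥ 1/2`. For `y ≥ 1`, the supremum of `φ_μ(y)` over all real `μ` is `F(y)`,
which increases with `y`; the case `y < 1` reduces to `1/y` through `φ_μ(y) = y φ_{1-μ}(1/y)`.
-/

open Real Set

lemma logMean_one_left {u : ℝ} (hu : u ≠ 1) : logMean 1 u = (u - 1) / log u := by
  rw [logMean, if_neg hu.symm, log_one, sub_zero]

lemma logMean_one_left_mul_log {u : ℝ} (hu : 0 < u) : logMean 1 u * log u = u - 1 := by
  rcases eq_or_ne u 1 with rfl | hu1
  · simp
  · rw [logMean_one_left hu1, div_mul_cancel₀]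
    exact log_ne_zero_of_pos_of_ne_one hu hu1

lemma one_le_logMean_one_left {u : ℝ} (hu : 1 ≤ u) : 1 ≤ logMean 1 u := by
  rcases hu.eq_or_lt with rfl | hu
  · simp [logMean]
  · rw [logMean_one_left hu.ne', le_div_iff₀ (log_pos hu), one_mul]
    linarith [log_le_sub_one_of_pos (zero_lt_one.trans hu)]

-- `logMean 1 u` is the slope of `exp` between `0` and `log u`, hence monotone by convexity.
lemma monotoneOn_logMean_one_left : MonotoneOn (logMean 1) (Ici 1) := by
  intro u (hu : 1 ≤ u) v (hv : 1 ≤ v) huv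
  rcases hu.eq_or_lt with rfl | hu
  · simpa [logMean] using one_le_logMean_one_left hv
  have hv' : 1 < v := hu.trans_le huv
  have key := convexOn_exp.secant_mono (mem_univ 0) (mem_univ (log u)) (mem_univ (log v))
    (log_pos hu).ne' (log_pos hv').ne' (log_le_log (by linarith) huv)
  rwa [exp_zero, exp_log (by linarith), exp_log (by linarith), sub_zero, sub_zero,
    ← logMean_one_left hu.ne', ← logMean_one_left hv'.ne'] at key

noncomputable def youngGap (μ u : ℝ) : ℝ := 1 + μ * (u - 1) - u ^ μ

-- The supremum of `youngGap μ u` over `μ`, attained where `u ^ μ = logMean 1 u`.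
noncomputable def youngGapSup (u : ℝ) : ℝ :=
  1 - logMean 1 u + logMean 1 u * log (logMean 1 u)

lemma youngGap_zero (u : ℝ) : youngGap 0 u = 0 := by simp [youngGap]

lemma youngGap_eq_mul_youngGap_inv (μ : ℝ) {u : ℝ} (hu : 0 < u) :
    youngGap μ u = u * youngGap (1 - μ) u⁻¹ := by
  have hpow : u⁻¹ ^ (1 - μ) = u ^ μ / u := by
    rw [inv_rpow hu.le, ← rpow_neg hu.le, neg_sub, rpow_sub_one hu.ne']
  rw [youngGap, youngGap, hpow]
  field_simp
  ring

-- Tangent line of `exp` at `log (logMean 1 u)`.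
lemma youngGap_le_youngGapSup (μ : ℝ) {u : ℝ} (hu : 1 ≤ u) : youngGap μ u ≤ youngGapSup u := by
  set L := logMean 1 u
  have hL : 0 < L := zero_lt_one.trans_le (one_le_logMean_one_left hu)
  have htangent : L * (μ * log u - log L + 1) ≤ u ^ μ := by
    calc L * (μ * log u - log L + 1) ≤ L * exp (μ * log u - log L) :=
          mul_le_mul_of_nonneg_left (add_one_le_exp _) hL.le
      _ = u ^ μ := by
          rw [exp_sub, exp_log hL, rpow_def_of_pos (by linarith), mul_comm μ]
          field_simp
  have hLlog : L * log u = u - 1 := logMean_one_left_mul_log (by linarith)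
  show 1 + μ * (u - 1) - u ^ μ ≤ 1 - L + L * log L
  linear_combination htangent - μ * hLlog

lemma youngGapSup_nonneg {u : ℝ} (hu : 1 ≤ u) : 0 ≤ youngGapSup u :=
  youngGap_zero u ▸ youngGap_le_youngGapSup 0 hu

lemma monotoneOn_one_sub_add_mul_log : MonotoneOn (fun L : ℝ => 1 - L + L * log L) (Ici 1) := by
  intro L₁ (h₁ : 1 ≤ L₁) L₂ (h₂ : 1 ≤ L₂) h₁₂
  have hpos₁ : 0 < L₁ := by linarith
  have hpos₂ : 0 < L₂ := by linarith
  have hlog : L₂ - L₁ ≤ L₂ * (log L₂ - log L₁) := by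
    have := one_sub_inv_le_log_of_pos (div_pos hpos₂ hpos₁)
    rw [inv_div, log_div hpos₂.ne' hpos₁.ne'] at this
    calc L₂ - L₁ = L₂ * (1 - L₁ / L₂) := by field_simp
      _ ≤ _ := mul_le_mul_of_nonneg_left this hpos₂.le
  linarith [mul_le_mul_of_nonneg_right h₁₂ (log_nonneg h₁)]

lemma monotoneOn_youngGapSup : MonotoneOn youngGapSup (Ici 1) :=
  monotoneOn_one_sub_add_mul_log.comp monotoneOn_logMean_one_left
    fun _ hu => one_le_logMean_one_left hu

lemma youngGap_le_youngGapSup_of_mem_Icc (μ : ℝ) {t u : ℝ} (ht : 1 ≤ t) (hu : u ∈ Icc t⁻¹ t) :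
    youngGap μ u ≤ youngGapSup t := by
  have hu0 : 0 < u := (inv_pos.2 (by linarith)).trans_le hu.1
  rcases le_or_gt 1 u with hu1 | hu1
  · exact (youngGap_le_youngGapSup μ hu1).trans (monotoneOn_youngGapSup hu1 ht hu.2)
  · have hinv : 1 ≤ u⁻¹ := one_le_inv₀ hu0 |>.2 hu1.le
    have hinvt : u⁻¹ ≤ t := inv_le_of_inv_le₀ (by linarith) hu.1
    calc youngGap μ u = u * youngGap (1 - μ) u⁻¹ := youngGap_eq_mul_youngGap_inv μ hu0
      _ ≤ u * youngGapSup t := mul_le_mul_of_nonneg_left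
          ((youngGap_le_youngGapSup _ hinv).trans (monotoneOn_youngGapSup hinv ht hinvt)) hu0.le
      _ ≤ youngGapSup t := mul_le_of_le_one_left (youngGapSup_nonneg ht) hu1.le

lemma logMean_comm (x y : ℝ) : logMean x y = logMean y x := by
  unfold logMean
  split_ifs with h h' h'
  · exact h
  · exact absurd h.symm h'
  · exact absurd h'.symm h
  · rw [← neg_sub y x, ← neg_sub (log y), neg_div_neg_eq]

lemma logMean_mul_mul {c : ℝ} (hc : 0 < c) {x y : ℝ} (hx : 0 < x) (hy : 0 < y) :
    logMean (c * x) (c * y) = c * logMean x y := by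
  unfold logMean
  simp only [mul_right_inj' hc.ne']
  split_ifs
  · rfl
  · rw [log_mul hc.ne' hy.ne', log_mul hc.ne' hx.ne', ← mul_sub, add_sub_add_left_eq_sub,
      mul_div_assoc]

lemma log_specht {t : ℝ} (ht : 1 < t) :
    log (specht t) = (logMean 1 t)⁻¹ - 1 + log (logMean 1 t) := by
  have ht0 : 0 < t := by linarith
  have hexp : (1 : ℝ) / (t - 1) * log t = (logMean 1 t)⁻¹ := by
    rw [logMean_one_left ht.ne', inv_div, one_div_mul_eq_div]
  have hpow : log (t ^ ((1 : ℝ) / (t - 1))) = (logMean 1 t)⁻¹ := by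
    rw [log_rpow ht0, hexp]
  have hL : 0 < logMean 1 t := zero_lt_one.trans_le (one_le_logMean_one_left ht.le)
  rw [specht, if_neg ht.ne', hpow, log_div (rpow_pos_of_pos ht0 _).ne' (by positivity),
    log_mul (exp_pos 1).ne' (by positivity), log_exp, hpow, log_inv]
  ring

lemma youngGapSup_eq_logMean_mul_log_specht {t : ℝ} (ht : 1 < t) :
    youngGapSup t = logMean 1 t * log (specht t) := by
  have hL : 0 < logMean 1 t := zero_lt_one.trans_le (one_le_logMean_one_left ht.le)
  rw [youngGapSup, log_specht ht]
  field_simp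

lemma div_mul_sqrt_mul_logMean_mul_log_specht {m M : ℝ} (hm : 0 < m) (hmM : m < M) :
    M / m * √M * logMean √M √m * log (specht √(M / m)) = M * (√(M / m) * youngGapSup √(M / m)) := by
  set t := √(M / m)
  have hsm : 0 < √m := sqrt_pos.2 hm
  have ht : 1 < t := lt_sqrt zero_le_one |>.2 (by rw [one_pow, one_lt_div hm]; exact hmM)
  have hM : √M = √m * t := by
    rw [show t = √M / √m from sqrt_div' _ hm.le]
    field_simp
  have hlogMean : logMean √M √m = √m * logMean 1 t := by
    rw [logMean_comm, hM, ← logMean_mul_mul hsm one_pos (by linarith), mul_one]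
  rw [youngGapSup_eq_logMean_mul_log_specht ht, hlogMean, hM]
  field_simp
  rw [sq_sqrt hm.le]

-- The left-hand side of the theorem for `A = 1`, `B = x`.
noncomputable def refinedYoungDiff (ν r x : ℝ) : ℝ :=
  (1 - ν) + ν * x - x ^ ν - 2 * r * ((1 / 2) * (1 + x) - x ^ (1 / 2 : ℝ))

lemma refinedYoungDiff_sq_self (ν : ℝ) {y : ℝ} (hy : 0 ≤ y) :
    refinedYoungDiff ν ν (y ^ 2) = youngGap (2 * ν) y := by
  have hpow (e : ℝ) : (y ^ 2) ^ e = y ^ (2 * e) := by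
    rw [← rpow_two, ← rpow_mul hy]
  rw [refinedYoungDiff, youngGap, hpow, hpow, mul_one_div_cancel two_ne_zero, rpow_one]
  ring

lemma refinedYoungDiff_sq_one_sub (ν : ℝ) {y : ℝ} (hy : 0 < y) :
    refinedYoungDiff ν (1 - ν) (y ^ 2) = y * youngGap (2 * ν - 1) y := by
  have hpow (e : ℝ) : (y ^ 2) ^ e = y ^ (2 * e) := by
    rw [← rpow_two, ← rpow_mul hy.le]
  have hmul : y ^ (2 * ν) = y * y ^ (2 * ν - 1) := by
    rw [rpow_sub_one hy.ne', mul_div_cancel₀ _ hy.ne']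
  rw [refinedYoungDiff, youngGap, hpow, hpow, mul_one_div_cancel two_ne_zero, rpow_one, hmul]
  ring

lemma refinedYoungDiff_le (ν : ℝ) {h x : ℝ} (hh : 1 ≤ h) (hx : x ∈ Icc h⁻¹ h) :
    refinedYoungDiff ν (min ν (1 - ν)) x ≤ √h * youngGapSup √h := by
  have hx0 : 0 < x := (inv_pos.2 (by positivity)).trans_le hx.1
  have ht : 1 ≤ √h := one_le_sqrt.2 hh
  have hy : √x ∈ Icc (√h)⁻¹ √h :=
    ⟨sqrt_inv h ▸ sqrt_le_sqrt hx.1, sqrt_le_sqrt hx.2⟩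
  have hgap (μ : ℝ) := youngGap_le_youngGapSup_of_mem_Icc μ ht hy
  have hsup := youngGapSup_nonneg ht
  rw [← sq_sqrt hx0.le]
  rcases le_total ν (1 - ν) with hν | hν
  · rw [min_eq_left hν, refinedYoungDiff_sq_self ν (sqrt_nonneg x)]
    exact (hgap _).trans (le_mul_of_one_le_left hsup ht)
  · rw [min_eq_right hν, refinedYoungDiff_sq_one_sub ν (sqrt_pos.2 hx0)]
    exact (mul_le_mul_of_nonneg_left (hgap _) (sqrt_nonneg x)).trans
      (mul_le_mul_of_nonneg_right hy.2 hsup)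

lemma continuousOn_refinedYoungDiff (ν r : ℝ) : ContinuousOn (refinedYoungDiff ν r) (Ioi 0) := by
  intro x (hx : 0 < x)
  unfold refinedYoungDiff
  fun_prop (disch := exact .inl hx.ne')

section OrderedModule

variable {E : Type*} [Preorder E] [MulAction ℝ E] [PosSMulMono ℝ E]

lemma le_div_smul_of_smul_le {a b e : E} {m M : ℝ} (hm : 0 < m) (hM : 0 ≤ M)
    (ha : m • e ≤ a) (hb : b ≤ M • e) : b ≤ (M / m) • a :=
  calc b ≤ M • e := hb
    _ = (M / m) • m • e := by rw [smul_smul, div_mul_cancel₀ _ hm.ne']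
    _ ≤ (M / m) • a := smul_le_smul_of_nonneg_left ha (by positivity)

lemma div_smul_le_of_le_smul {a b e : E} {m M : ℝ} (hm : 0 ≤ m) (hM : 0 < M)
    (ha : a ≤ M • e) (hb : m • e ≤ b) : (m / M) • a ≤ b :=
  calc (m / M) • a ≤ (m / M) • M • e := smul_le_smul_of_nonneg_left ha (by positivity)
    _ = m • e := by rw [smul_smul, div_mul_cancel₀ _ hM.ne']
    _ ≤ b := hb

end OrderedModule

section CStarAlgebra

variable {𝒜 : Type*} [CStarAlgebra 𝒜] [PartialOrder 𝒜] [StarOrderedRing 𝒜]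

open CFC

lemma isStrictlyPositive_of_smul_one_le {a : 𝒜} {m : ℝ} (hm : 0 < m) (h : m • 1 ≤ a) :
    IsStrictlyPositive a :=
  (isStrictlyPositive_algebraMap hm).of_le (by rwa [Algebra.algebraMap_eq_smul_one])

lemma spectrum_subset_Icc_of_smul_one_le {x : 𝒜} (hx : IsSelfAdjoint x) {k K : ℝ}
    (hk : k • 1 ≤ x) (hK : x ≤ K • 1) : spectrum ℝ x ⊆ Icc k K := by
  rw [← Algebra.algebraMap_eq_smul_one] at hk hK
  exact fun t ht => ⟨(algebraMap_le_iff_le_spectrum hx).1 hk t ht,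
    (le_algebraMap_iff_spectrum_le hx).1 hK t ht⟩

lemma rpow_neg_half_mul_smul_mul_rpow_neg_half {a : 𝒜} (ha : IsStrictlyPositive a) (k : ℝ) :
    a ^ (-(1 : ℝ) / 2) * (k • a) * a ^ (-(1 : ℝ) / 2) = k • 1 := by
  rw [mul_smul_comm, smul_mul_assoc, neg_div, conjugate_rpow_neg_one_half a]

lemma smul_one_le_rpow_neg_half_conj {a b : 𝒜} (ha : IsStrictlyPositive a) {k : ℝ}
    (h : k • a ≤ b) : k • 1 ≤ a ^ (-(1 : ℝ) / 2) * b * a ^ (-(1 : ℝ) / 2) :=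
  rpow_neg_half_mul_smul_mul_rpow_neg_half ha k ▸
    (IsSelfAdjoint.of_nonneg CFC.rpow_nonneg).conjugate_le_conjugate h

lemma rpow_neg_half_conj_le_smul_one {a b : 𝒜} (ha : IsStrictlyPositive a) {k : ℝ}
    (h : b ≤ k • a) : a ^ (-(1 : ℝ) / 2) * b * a ^ (-(1 : ℝ) / 2) ≤ k • 1 :=
  rpow_neg_half_mul_smul_mul_rpow_neg_half ha k ▸
    (IsSelfAdjoint.of_nonneg CFC.rpow_nonneg).conjugate_le_conjugate h

lemma rpow_neg_half_conj_mem_Icc {a b : 𝒜} {m M : ℝ} (hm : 0 < m) (hM : 0 < M)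
    (hma : m • 1 ≤ a) (haM : a ≤ M • 1) (hmb : m • 1 ≤ b) (hbM : b ≤ M • 1) :
    a ^ (-(1 : ℝ) / 2) * b * a ^ (-(1 : ℝ) / 2) ∈ Icc ((M / m)⁻¹ • 1) ((M / m) • 1) := by
  have ha := isStrictlyPositive_of_smul_one_le hm hma
  rw [inv_div]
  exact ⟨smul_one_le_rpow_neg_half_conj ha (div_smul_le_of_le_smul hm.le hM haM hmb),
    rpow_neg_half_conj_le_smul_one ha (le_div_smul_of_smul_le hm hM.le hma hbM)⟩

lemma rpow_half_mul_rpow_half {a : 𝒜} (ha : 0 ≤ a) : a ^ ((1 : ℝ) / 2) * a ^ ((1 : ℝ) / 2) = a := by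
  rw [← CFC.sqrt_eq_rpow (a := a), sqrt_mul_sqrt_self a]

lemma rpow_half_conj_rpow_neg_half_conj {a : 𝒜} (ha : IsStrictlyPositive a) (b : 𝒜) :
    a ^ ((1 : ℝ) / 2) * (a ^ (-(1 : ℝ) / 2) * b * a ^ (-(1 : ℝ) / 2)) * a ^ ((1 : ℝ) / 2) = b := by
  have hinv : a ^ ((1 : ℝ) / 2) * a ^ (-(1 : ℝ) / 2) = 1 := by
    rw [neg_div]; exact rpow_mul_rpow_neg _
  have hinv' : a ^ (-(1 : ℝ) / 2) * a ^ ((1 : ℝ) / 2) = 1 := by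
    rw [neg_div]; exact rpow_neg_mul_rpow _
  simp only [← mul_assoc, hinv, one_mul]
  rw [mul_assoc, hinv', mul_one]

lemma conj_le_smul_mul_self {s x : 𝒜} (hs : IsSelfAdjoint s) {c : ℝ} (h : x ≤ c • 1) :
    s * x * s ≤ c • (s * s) := by
  simpa only [mul_smul_comm, smul_mul_assoc, mul_one] using hs.conjugate_le_conjugate h

lemma cfc_refinedYoungDiff {x : 𝒜} (hx : IsStrictlyPositive x) (ν r : ℝ) :
    cfc (refinedYoungDiff ν r) x
      = (1 - ν) • 1 + ν • x - x ^ ν - (2 * r) • ((1 / 2 : ℝ) • (1 + x) - x ^ (1 / 2 : ℝ)) := by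
  have hpow (e : ℝ) : ContinuousOn (fun t : ℝ => t ^ e) (spectrum ℝ x) :=
    fun t ht => (continuousAt_rpow_const t e (.inl (hx.spectrum_pos ht).ne')).continuousWithinAt
  have := hpow ν
  have := hpow (1 / 2)
  rw [rpow_eq_cfc_real hx.nonneg, rpow_eq_cfc_real hx.nonneg]
  unfold refinedYoungDiff
  rw [cfc_sub .., cfc_sub .., cfc_add .., cfc_const_mul .., cfc_sub .., cfc_const_mul ..,
    cfc_sub .., cfc_const_mul .., cfc_add .., cfc_const 1 x, cfc_const ν x, cfc_id' ℝ x]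
  simp only [Algebra.algebraMap_eq_smul_one]
  module

lemma cfc_refinedYoungDiff_le_smul_one (ν : ℝ) {x : 𝒜} {h : ℝ} (hh : 1 ≤ h)
    (hx : x ∈ Icc (h⁻¹ • 1) (h • 1)) :
    cfc (refinedYoungDiff ν (min ν (1 - ν))) x ≤ (√h * youngGapSup √h) • 1 := by
  have hx' : IsStrictlyPositive x := isStrictlyPositive_of_smul_one_le (by positivity) hx.1
  rw [← Algebra.algebraMap_eq_smul_one]
  refine cfc_le_algebraMap _ _ x (fun y hy => refinedYoungDiff_le ν hh ?_)
    ((continuousOn_refinedYoungDiff _ _).mono fun y hy => hx'.spectrum_pos hy)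
  exact spectrum_subset_Icc_of_smul_one_le hx'.isSelfAdjoint hx.1 hx.2 hy

lemma conj_cfc_refinedYoungDiff {x : 𝒜} (hx : IsStrictlyPositive x) (s : 𝒜) (ν r : ℝ) :
    s * cfc (refinedYoungDiff ν r) x * s =
      (1 - ν) • (s * s) + ν • (s * x * s) - s * x ^ ν * s
        - (2 * r) • ((1 / 2 : ℝ) • (s * s + s * x * s) - s * x ^ (1 / 2 : ℝ) * s) := by
  rw [cfc_refinedYoungDiff hx]
  simp only [mul_sub, sub_mul, mul_add, add_mul, mul_smul_comm, smul_mul_assoc, mul_one]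

end CStarAlgebra

theorem reverse_diff_refined_young_operator_general (A B : H →L[ℂ] H)
    (m M : ℝ) (hm : 0 < m) (hmM : m < M)
    (hmA : m • (1 : H →L[ℂ] H) ≤ A) (hAM : A ≤ M • (1 : H →L[ℂ] H))
    (hmB : m • (1 : H →L[ℂ] H) ≤ B) (hBM : B ≤ M • (1 : H →L[ℂ] H))
    (ν : ℝ) (r : ℝ) (hr : r = min ν (1 - ν)) :
    (1 - ν) • A + ν • B - geomMean A B ν -
        (2 * r) • ((1/2 : ℝ) • (A + B) - geomMean A B (1/2)) ≤
      ((M / m) * Real.sqrt M * logMean (Real.sqrt M) (Real.sqrt m) *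
        Real.log (specht (Real.sqrt (M / m)))) • (1 : H →L[ℂ] H) := by
  have hA : IsStrictlyPositive A := isStrictlyPositive_of_smul_one_le hm hmA
  set X := A ^ (-(1 : ℝ) / 2) * B * A ^ (-(1 : ℝ) / 2)
  have hX : X ∈ Icc ((M / m)⁻¹ • 1) ((M / m) • 1) :=
    rpow_neg_half_conj_mem_Icc hm (hm.trans hmM) hmA hAM hmB hBM
  have hh : 1 ≤ M / m := (one_le_div hm).2 hmM.le
  set c := √(M / m) * youngGapSup √(M / m)
  set S := A ^ ((1 : ℝ) / 2)
  have hSS : S * S = A := rpow_half_mul_rpow_half hA.nonneg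
  calc _ = S * cfc (refinedYoungDiff ν (min ν (1 - ν))) X * S := by
        rw [conj_cfc_refinedYoungDiff (isStrictlyPositive_of_smul_one_le (by positivity) hX.1),
          hSS, rpow_half_conj_rpow_neg_half_conj hA B, hr]; rfl
    _ ≤ c • A := hSS ▸ conj_le_smul_mul_self (IsSelfAdjoint.of_nonneg CFC.rpow_nonneg)
        (cfc_refinedYoungDiff_le_smul_one ν hh hX)
    _ ≤ c • M • 1 := smul_le_smul_of_nonneg_left hAM
        (mul_nonneg (by positivity) (youngGapSup_nonneg (one_le_sqrt.2 hh)))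
    _ = _ := by rw [smul_smul, div_mul_sqrt_mul_logMean_mul_log_specht hm hmM, mul_comm]

theorem reverse_diff_refined_young_operator (A B : H →L[ℂ] H)
    (hAu : IsUnit A) (hBu : IsUnit B) (m M : ℝ) (hm : 0 < m) (hmM : m < M)
    (hmA : m • (1 : H →L[ℂ] H) ≤ A) (hAM : A ≤ M • (1 : H →L[ℂ] H))
    (hmB : m • (1 : H →L[ℂ] H) ≤ B) (hBM : B ≤ M • (1 : H →L[ℂ] H))
    (ν : ℝ) (hν : ν ∈ Set.Icc (0:ℝ) 1) (r : ℝ) (hr : r = min ν (1 - ν)) :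
    (1 - ν) • A + ν • B - geomMean A B ν -
        (2 * r) • ((1/2 : ℝ) • (A + B) - geomMean A B (1/2)) ≤
      ((M / m) * Real.sqrt M * logMean (Real.sqrt M) (Real.sqrt m) *
        Real.log (specht (Real.sqrt (M / m)))) • (1 : H →L[ℂ] H) :=
  reverse_diff_refined_young_operator_general A B m M hm hmM hmA hAM hmB hBM ν r hr
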